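/- arXiv:2512.23266 — 3 statements merged into one kernel-verified Lean document; each statement's English description precedes it below -/
import Mathlib

section
/- Let E_1,...,E_ℓ be i.i.d. exponential random variables with mean 1, and let E_(1) > E_(2) > ... > E_(ℓ) be their decreasing order statistics. Then for any k ∈ {1,...,ℓ}, the expectation E[∑_{i=1}^k E_(i)] ≤ k + k·ln(ℓ/k). -/
/-!
For every threshold `t`, the sum of any `k` of the numbers `x_1, …, x_ℓ` is at most
`k t + ∑ᵢ (xᵢ - t)⁺`. For an exponential variable `E[(E - t)⁺] = e^{-t}` when `t ≥ 0`, so the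
expected sum of the `k` largest values is at most `k t + ℓ e^{-t}`; the choice `t = ln (ℓ / k)`
gives `k + k ln (ℓ / k)`.
-/

open MeasureTheory ProbabilityTheory Real Set Filter

namespace ProbabilityTheory

variable {r : ℝ}

lemma exponentialPDFReal_eq (r x : ℝ) :
    exponentialPDFReal r x = if 0 ≤ x then r * exp (-(r * x)) else 0 := by
  simp [exponentialPDFReal, gammaPDFReal]

lemma expMeasure_eq_withDensity (r : ℝ) : expMeasure r =
    volume.withDensity (fun x => ((exponentialPDFReal r x).toNNReal : ENNReal)) := rfl

lemma integral_expMeasure_eq (hr : 0 < r) (f : ℝ → ℝ) :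
    ∫ x, f x ∂expMeasure r = ∫ x, exponentialPDFReal r x * f x := by
  rw [expMeasure_eq_withDensity,
    integral_withDensity_eq_integral_smul (measurable_exponentialPDFReal r).real_toNNReal]
  simp only [NNReal.smul_def, Real.coe_toNNReal _ (exponentialPDFReal_nonneg hr _), smul_eq_mul]

lemma integrable_expMeasure_iff (hr : 0 < r) {f : ℝ → ℝ} :
    Integrable f (expMeasure r) ↔ Integrable (fun x => exponentialPDFReal r x * f x) := by
  rw [expMeasure_eq_withDensity,
    integrable_withDensity_iff_integrable_smul (measurable_exponentialPDFReal r).real_toNNReal]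
  simp only [NNReal.smul_def, Real.coe_toNNReal _ (exponentialPDFReal_nonneg hr _), smul_eq_mul]

lemma exponentialPDFReal_mul_posPart_sub {t : ℝ} (ht : 0 ≤ t) :
    (fun x => exponentialPDFReal r x * max (x - t) 0)
      = (Ioi t).indicator (fun x => r * (x - t) * exp (-(r * x))) := by
  funext x
  rcases lt_or_ge t x with h | h
  · rw [indicator_of_mem (show x ∈ Ioi t from h), exponentialPDFReal_eq, if_pos (ht.trans h.le),
      max_eq_left (by linarith)]
    ring
  · rw [indicator_of_notMem (by simpa using h), max_eq_right (by linarith), mul_zero]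

-- `-(x - t + 1 / r) * exp (-(r * x))` is an antiderivative vanishing at infinity.
lemma integral_Ioi_mul_sub_mul_exp_neg (hr : 0 < r) (t : ℝ) :
    IntegrableOn (fun x => r * (x - t) * exp (-(r * x))) (Ioi t) ∧
      ∫ x in Ioi t, r * (x - t) * exp (-(r * x)) = exp (-(r * t)) / r := by
  set F : ℝ → ℝ := fun x => -(x - t + 1 / r) * exp (-(r * x))
  have hcont : ContinuousWithinAt F (Ici t) t := by fun_prop
  have hderiv : ∀ x ∈ Ioi t, HasDerivAt F (r * (x - t) * exp (-(r * x))) x := by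
    intro x _
    have hlin : HasDerivAt (fun y => -(y - t + 1 / r)) (-1) x :=
      (((hasDerivAt_id x).sub_const t).add_const _).neg
    have hexp : HasDerivAt (fun y => exp (-(r * y))) (exp (-(r * x)) * -r) x := by
      simpa using (((hasDerivAt_id x).const_mul r).neg).exp
    exact (hlin.mul hexp).congr_deriv (by field_simp; ring)
  have hnonneg : ∀ x ∈ Ioi t, 0 ≤ r * (x - t) * exp (-(r * x)) := fun x hx =>
    mul_nonneg (mul_nonneg hr.le (sub_nonneg.mpr (le_of_lt hx))) (exp_pos _).le
  have hlim : Tendsto F atTop (nhds 0) := by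
    have h1 := tendsto_rpow_mul_exp_neg_mul_atTop_nhds_zero 1 r hr
    have h2 := (tendsto_exp_neg_atTop_nhds_zero.comp (tendsto_id.const_mul_atTop hr))
    have := (h1.add (h2.const_mul (1 / r - t))).neg
    simp only [add_zero, neg_zero, mul_zero] at this
    refine this.congr fun x => ?_
    simp only [F, rpow_one, Function.comp_apply, id_eq, neg_mul]
    ring
  refine ⟨integrableOn_Ioi_deriv_of_nonneg hcont hderiv hnonneg hlim, ?_⟩
  rw [integral_Ioi_of_hasDerivAt_of_nonneg hcont hderiv hnonneg hlim]
  simp [F, div_eq_inv_mul]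

lemma integrable_posPart_sub_expMeasure (hr : 0 < r) {t : ℝ} (ht : 0 ≤ t) :
    Integrable (fun x => max (x - t) 0) (expMeasure r) := by
  rw [integrable_expMeasure_iff hr, exponentialPDFReal_mul_posPart_sub ht,
    integrable_indicator_iff measurableSet_Ioi]
  exact (integral_Ioi_mul_sub_mul_exp_neg hr t).1

lemma integral_posPart_sub_expMeasure (hr : 0 < r) {t : ℝ} (ht : 0 ≤ t) :
    ∫ x, max (x - t) 0 ∂expMeasure r = exp (-(r * t)) / r := by
  rw [integral_expMeasure_eq hr, exponentialPDFReal_mul_posPart_sub ht,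
    integral_indicator measurableSet_Ioi, (integral_Ioi_mul_sub_mul_exp_neg hr t).2]

lemma integrable_id_expMeasure (hr : 0 < r) : Integrable (fun x => x) (expMeasure r) := by
  have hpos := integrable_posPart_sub_expMeasure hr le_rfl
  rw [integrable_expMeasure_iff hr] at hpos ⊢
  refine hpos.congr (Eventually.of_forall fun x => ?_)
  rcases lt_or_ge x 0 with hx | hx
  · simp [exponentialPDFReal_eq, not_le.mpr hx]
  · simp [hx]

end ProbabilityTheory

lemma Finset.sum_le_card_mul_add_sum_posPart {ι : Type*} {s u : Finset ι} (hsu : s ⊆ u)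
    (f : ι → ℝ) (t : ℝ) :
    ∑ i ∈ s, f i ≤ s.card * t + ∑ i ∈ u, max (f i - t) 0 :=
  calc ∑ i ∈ s, f i ≤ ∑ i ∈ s, (t + max (f i - t) 0) :=
        sum_le_sum fun i _ => by linarith [le_max_left (f i - t) 0]
    _ = s.card * t + ∑ i ∈ s, max (f i - t) 0 := by
        rw [sum_add_distrib, sum_const, nsmul_eq_mul]
    _ ≤ s.card * t + ∑ i ∈ u, max (f i - t) 0 := by
        gcongr

namespace MeasureTheory

variable {Ω ι : Type*} [MeasurableSpace Ω] {μ : Measure Ω}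

lemma integrable_finset_sup' {s : Finset ι} (hs : s.Nonempty) {f : ι → Ω → ℝ}
    (hf : ∀ i ∈ s, Integrable (f i) μ) : Integrable (fun ω => s.sup' hs fun i => f i ω) μ := by
  induction hs using Finset.Nonempty.cons_induction with
  | singleton a => simpa using hf a (by simp)
  | cons a s _ hs ih =>
    refine ((hf a (by simp)).sup (ih fun i hi => hf i (by simp [hi]))).congr
      (Eventually.of_forall fun ω => ?_)
    exact (Finset.sup'_cons hs (fun i => f i ω)).symm

lemma integral_sup'_powersetCard_sum_le [IsProbabilityMeasure μ] [Fintype ι] {k : ℕ}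
    (hne : (Finset.powersetCard k (Finset.univ : Finset ι)).Nonempty)
    {E : ι → Ω → ℝ} (hE : ∀ i, Integrable (E i) μ) (t : ℝ) :
    ∫ ω, (Finset.powersetCard k Finset.univ).sup' hne (fun s => ∑ i ∈ s, E i ω) ∂μ
      ≤ k * t + ∑ i, ∫ ω, max (E i ω - t) 0 ∂μ := by
  have hposPart : ∀ i, Integrable (fun ω => max (E i ω - t) 0) μ := fun i =>
    ((hE i).sub (integrable_const t)).sup (integrable_const 0)
  have hbound : ∀ ω, (Finset.powersetCard k Finset.univ).sup' hne (fun s => ∑ i ∈ s, E i ω)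
      ≤ k * t + ∑ i, max (E i ω - t) 0 := fun ω =>
    Finset.sup'_le _ _ fun s hs => by
      simpa [Finset.mem_powersetCard_univ.mp hs] using
        Finset.sum_le_card_mul_add_sum_posPart (Finset.subset_univ s) (fun i => E i ω) t
  calc _ ≤ ∫ ω, k * t + ∑ i, max (E i ω - t) 0 ∂μ :=
        integral_mono
          (integrable_finset_sup' hne fun s _ => integrable_finsetSum _ fun i _ => hE i)
          ((integrable_const _).add (integrable_finsetSum _ fun i _ => hposPart i)) hbound
    _ = k * t + ∑ i, ∫ ω, max (E i ω - t) 0 ∂μ := by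
        rw [integral_add (integrable_const _) (integrable_finsetSum _ fun i _ => hposPart i),
          integral_const, integral_finsetSum _ fun i _ => hposPart i, probReal_univ, one_smul]

end MeasureTheory

theorem stmt0_general {Ω : Type*} [MeasurableSpace Ω] (μ : Measure Ω) [IsProbabilityMeasure μ]
    (ℓ k : ℕ) (hk : 1 ≤ k) (hkℓ : k ≤ ℓ)
    (E : Fin ℓ → Ω → ℝ) (hmeas : ∀ i, Measurable (E i))
    (hlaw : ∀ i, μ.map (E i) = expMeasure 1)
    (hne : (Finset.powersetCard k (Finset.univ : Finset (Fin ℓ))).Nonempty) :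
    ∫ ω, (Finset.powersetCard k (Finset.univ : Finset (Fin ℓ))).sup'
        hne (fun s => ∑ i ∈ s, E i ω) ∂μ
      ≤ k + k * Real.log (ℓ / k) := by
  have hkpos : (0 : ℝ) < k := by exact_mod_cast hk
  have hkℓ' : (k : ℝ) ≤ ℓ := by exact_mod_cast hkℓ
  have hℓpos : (0 : ℝ) < ℓ := hkpos.trans_le hkℓ'
  set t := Real.log (ℓ / k)
  have ht : 0 ≤ t := Real.log_nonneg ((one_le_div hkpos).mpr hkℓ')
  have hE : ∀ i, Integrable (E i) μ := fun i =>
    (integrable_map_measure (g := fun x => x) aestronglyMeasurable_id (hmeas i).aemeasurable).mp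
      (by rw [hlaw i]; exact integrable_id_expMeasure one_pos)
  have hposPart : ∀ i, ∫ ω, max (E i ω - t) 0 ∂μ = exp (-t) := fun i =>
    (integral_map (f := fun x => max (x - t) 0) (hmeas i).aemeasurable (by fun_prop)).symm.trans
      (by rw [hlaw i, integral_posPart_sub_expMeasure one_pos ht, one_mul, div_one])
  calc _ ≤ k * t + ∑ i, ∫ ω, max (E i ω - t) 0 ∂μ := integral_sup'_powersetCard_sum_le hne hE t
    _ = k + k * t := by
      rw [Finset.sum_congr rfl fun i _ => hposPart i, Finset.sum_const, Finset.card_univ,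
        Fintype.card_fin, nsmul_eq_mul, exp_neg, exp_log (by positivity)]
      field_simp
      ring

/-- Sum of the `k` largest among `E_1, ..., E_ℓ` i.i.d. exponential(1) random variables has
expectation at most `k + k · ln(ℓ/k)`.  The sum of the `k` largest values is expressed as the
maximum, over all subsets `s` of cardinality `k`, of the sum over `s`. -/
theorem stmt0 {Ω : Type*} [MeasurableSpace Ω] (μ : Measure Ω) [IsProbabilityMeasure μ]
    (ℓ k : ℕ) (hk : 1 ≤ k) (hkℓ : k ≤ ℓ)
    (E : Fin ℓ → Ω → ℝ) (hmeas : ∀ i, Measurable (E i))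
    (hindep : iIndepFun E μ)
    (hlaw : ∀ i, μ.map (E i) = expMeasure 1)
    (hne : (Finset.powersetCard k (Finset.univ : Finset (Fin ℓ))).Nonempty) :
    ∫ ω, (Finset.powersetCard k (Finset.univ : Finset (Fin ℓ))).sup'
        hne (fun s => ∑ i ∈ s, E i ω) ∂μ
      ≤ k + k * Real.log (ℓ / k) :=
  stmt0_general μ ℓ k hk hkℓ E hmeas hlaw hne
end

section
/- Fix a counting-measure domination order: for finite point configurations μ = {x_1 ≤ ... ≤ x_p} and ν = {y_1 ≤ ... ≤ y_q} on ℝ, write μ ≻ ν if p ≤ q and x_i ≥ y_i for all i ≤ p. Suppose μ ≻ ν, each point z of μ and the corresponding point z' ≤ z of ν both give offspring z + Ξ and z' + Ξ' with Ξ, Ξ' copies of the same point process, coupled so that the same realization Ξ is used for matched points. If from ν's offspring one keeps only the N leftmost points (configuration ν̂), and from μ's offspring one keeps an arbitrary subset μ̂ with at most N points, then μ̂ ≻ ν̂. -/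
/-! A configuration `A` dominates `B` as soon as, for every threshold `t`, `A` has at most as
many points `≤ t` as `B`: the `i`-th smallest point is `≤ t` iff more than `i` points are `≤ t`.
The offspring of `μ` are those of the matched points of `ν` shifted to the right, so any subset
of them has, below every threshold, at most as many points as the whole offspring of `ν`; and
keeping the `N` leftmost offspring of `ν` does not change its first `N` order statistics. -/

/-- The sorted (nondecreasing) list of a finite multiset of reals. -/
noncomputable def msort (A : Multiset ℝ) : List ℝ :=
  Multiset.sort A (· ≤ ·)

/-- Domination order on finite point configurations: `Dom A B` holds iff `A` has at most as
many points as `B` and the `i`-th smallest point of `A` is `≥` the `i`-th smallest point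
of `B`, for every `i < card A`. -/
def Dom (A B : Multiset ℝ) : Prop :=
  Multiset.card A ≤ Multiset.card B ∧
    ∀ i : ℕ, i < Multiset.card A → (msort B).getD i 0 ≤ (msort A).getD i 0

theorem List.Pairwise.getElem_le_iff_lt_countP {α : Type*} [LinearOrder α] {l : List α}
    (hl : l.Pairwise (· ≤ ·)) {i : ℕ} (hi : i < l.length) (t : α) :
    l[i] ≤ t ↔ i < l.countP (· ≤ t) := by
  have hsplit := l.take_append_drop i
  have hbefore : ∀ a ∈ l.take i, a ≤ l[i] := by
    rw [← hsplit, List.pairwise_append] at hl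
    exact fun a ha => hl.2.2 a ha _ (List.drop_eq_getElem_cons hi ▸ List.mem_cons_self ..)
  have hafter : ∀ b ∈ l.drop i, l[i] ≤ b := by
    rw [List.drop_eq_getElem_cons hi] at hsplit ⊢
    rw [← hsplit, List.pairwise_append, List.pairwise_cons] at hl
    rintro b (_ | ⟨_, hb⟩)
    exacts [le_rfl, hl.2.1.1 b hb]
  have hlen : (l.take i).length = i := by simp only [List.length_take]; omega
  have hcount : l.countP (· ≤ t) = (l.take i).countP (· ≤ t) + (l.drop i).countP (· ≤ t) := by
    rw [← List.countP_append, hsplit]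
  rw [hcount]
  constructor
  · intro h
    have htake : (l.take i).countP (· ≤ t) = i :=
      (List.countP_eq_length.2 fun a ha => by simpa using (hbefore a ha).trans h).trans hlen
    have hdrop : 0 < (l.drop i).countP (· ≤ t) :=
      List.countP_pos_iff.2 ⟨l[i], List.drop_eq_getElem_cons hi ▸ List.mem_cons_self .., by simpa⟩
    omega
  · intro h
    by_contra! ht
    have hdrop : (l.drop i).countP (· ≤ t) = 0 :=
      List.countP_eq_zero.2 fun b hb => by simpa using ht.trans_le (hafter b hb)
    have htake : (l.take i).countP (· ≤ t) ≤ i := List.countP_le_length.trans_eq hlen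
    omega

theorem length_msort (A : Multiset ℝ) : (msort A).length = Multiset.card A :=
  Multiset.length_sort _

theorem msort_coe_of_pairwise {l : List ℝ} (hl : l.Pairwise (· ≤ ·)) : msort l = l :=
  List.mergeSort_eq_self _ hl

theorem getD_msort_le_iff_lt_countP {A : Multiset ℝ} {i : ℕ} (hi : i < Multiset.card A) (t : ℝ) :
    (msort A).getD i 0 ≤ t ↔ i < A.countP (· ≤ t) := by
  have hi' : i < (msort A).length := (length_msort A).symm ▸ hi
  conv_rhs => rw [← Multiset.sort_eq A (· ≤ ·), Multiset.coe_countP]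
  rw [List.getD_eq_getElem _ _ hi']
  exact (Multiset.pairwise_sort A _).getElem_le_iff_lt_countP hi' t

theorem Multiset.card_le_card_of_forall_countP_le {α : Type*} [LinearOrder α] [Nonempty α]
    {A B : Multiset α} (h : ∀ t, A.countP (· ≤ t) ≤ B.countP (· ≤ t)) :
    Multiset.card A ≤ Multiset.card B := by
  classical
  obtain ⟨t, ht⟩ := A.toFinset.bddAbove
  calc Multiset.card A = A.countP (· ≤ t) :=
        (Multiset.countP_eq_card.2 fun a ha => ht (Multiset.mem_toFinset.2 ha)).symm
    _ ≤ B.countP (· ≤ t) := h t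
    _ ≤ Multiset.card B := Multiset.countP_le_card _ _

theorem dom_of_forall_countP_le {A B : Multiset ℝ}
    (h : ∀ t, A.countP (· ≤ t) ≤ B.countP (· ≤ t)) : Dom A B := by
  have hcard := Multiset.card_le_card_of_forall_countP_le h
  refine ⟨hcard, fun i hi => ?_⟩
  have hiA : i < A.countP (· ≤ (msort A).getD i 0) := (getD_msort_le_iff_lt_countP hi _).1 le_rfl
  exact (getD_msort_le_iff_lt_countP (hi.trans_le hcard) _).2 (hiA.trans_le (h _))

theorem Dom.take_msort {A B : Multiset ℝ} (h : Dom A B) {N : ℕ}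
    (hN : Multiset.card A ≤ N) : Dom A ((msort B).take N : List ℝ) := by
  have hsort : msort ((msort B).take N : List ℝ) = (msort B).take N :=
    msort_coe_of_pairwise ((Multiset.pairwise_sort B _).sublist (List.take_sublist _ _))
  refine ⟨?_, fun i hi => ?_⟩
  · simpa [length_msort] using ⟨hN, h.1⟩
  · have hiB : i < (msort B).length := length_msort B ▸ hi.trans_le h.1
    have hiN : i < ((msort B).take N).length := by
      simp only [List.length_take]; exact lt_min (hi.trans_le hN) hiB
    rw [hsort, List.getD_eq_getElem _ _ hiN, List.getElem_take, ← List.getD_eq_getElem _ 0 hiB]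
    exact h.2 i hi

theorem Multiset.countP_map_add_le_of_le {α : Type*} [Add α] [LinearOrder α] [AddRightMono α]
    {a b : α} (hba : b ≤ a) (s : Multiset α) (t : α) :
    (s.map (a + ·)).countP (· ≤ t) ≤ (s.map (b + ·)).countP (· ≤ t) := by
  simp only [Multiset.countP_map]
  exact Multiset.card_le_card <|
    Multiset.monotone_filter_right s fun z (hz : a + z ≤ t) => (add_le_add_left hba z).trans hz

theorem Fin.sum_castLE_le {M : Type*} [AddCommMonoid M] [PartialOrder M] [CanonicallyOrderedAdd M]
    {p q : ℕ} (h : p ≤ q) (f : Fin q → M) : ∑ i : Fin p, f (Fin.castLE h i) ≤ ∑ j, f j := by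
  calc ∑ i : Fin p, f (Fin.castLE h i) = ∑ j ∈ Finset.univ.map (Fin.castLEEmb h), f j :=
        (Finset.sum_map Finset.univ (Fin.castLEEmb h) f).symm
    _ ≤ ∑ j, f j := Finset.sum_le_sum_of_subset (Finset.subset_univ _)

theorem stmt18_general (p q N : ℕ) (hpq : p ≤ q)
    (x : Fin p → ℝ) (y : Fin q → ℝ)
    (hdom : ∀ i : Fin p, y (Fin.castLE hpq i) ≤ x i)
    (Ξ : Fin q → Multiset ℝ)
    (Mhat Nhat : Multiset ℝ)
    (hNhat : Nhat = ((msort (∑ i : Fin q, (Ξ i).map (fun z => y i + z))).take N : List ℝ))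
    (hMhat : Mhat ≤ ∑ i : Fin p, (Ξ (Fin.castLE hpq i)).map (fun z => x i + z))
    (hcard : Multiset.card Mhat ≤ N) :
    Dom Mhat Nhat := by
  have hcount (t : ℝ) : Mhat.countP (· ≤ t) ≤
      (∑ i : Fin q, (Ξ i).map (fun z => y i + z)).countP (· ≤ t) := by
    let count := Multiset.countPAddMonoidHom (· ≤ t)
    calc Mhat.countP (· ≤ t)
        ≤ count (∑ i : Fin p, (Ξ (Fin.castLE hpq i)).map (fun z => x i + z)) :=
          Multiset.countP_le_of_le _ hMhat
      _ = ∑ i : Fin p, count ((Ξ (Fin.castLE hpq i)).map (fun z => x i + z)) := map_sum ..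
      _ ≤ ∑ i : Fin p, count ((Ξ (Fin.castLE hpq i)).map (fun z => y (Fin.castLE hpq i) + z)) :=
          Finset.sum_le_sum fun i _ => Multiset.countP_map_add_le_of_le (hdom i) _ t
      _ ≤ ∑ j, count ((Ξ j).map (fun z => y j + z)) :=
          Fin.sum_castLE_le hpq fun j => count ((Ξ j).map (fun z => y j + z))
      _ = count (∑ j, (Ξ j).map (fun z => y j + z)) := (map_sum ..).symm
  subst hNhat
  exact (dom_of_forall_countP_le hcount).take_msort hcard

/-- One-step monotonicity of the `N`-selection branching mechanism: if the configuration
`x` (sorted, `p` points) dominates `y` (sorted, `q ≥ p` points) pointwise, each matched pair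
of points uses the same offspring displacement realization `Ξ i`, `ν̂` consists of the `N`
leftmost offspring of `y`, and `μ̂` is an arbitrary sub-multiset of the offspring of `x`
with at most `N` points, then `μ̂` dominates `ν̂`. -/
theorem stmt18 (p q N : ℕ) (hpq : p ≤ q)
    (x : Fin p → ℝ) (y : Fin q → ℝ) (hx : Monotone x) (hy : Monotone y)
    (hdom : ∀ i : Fin p, y (Fin.castLE hpq i) ≤ x i)
    (Ξ : Fin q → Multiset ℝ)
    (Mhat Nhat : Multiset ℝ)
    (hNhat : Nhat = ((msort (∑ i : Fin q, (Ξ i).map (fun z => y i + z))).take N : List ℝ))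
    (hMhat : Mhat ≤ ∑ i : Fin p, (Ξ (Fin.castLE hpq i)).map (fun z => x i + z))
    (hcard : Multiset.card Mhat ≤ N) :
    Dom Mhat Nhat :=
  stmt18_general p q N hpq x y hdom Ξ Mhat Nhat hNhat hMhat hcard
end

section
/- Let (Y_j) be a centered random walk with steps Exp(1) − 1, started at 0. For r < 0, let τ be the first exit time of Y from the interval [r, 0] (i.e. the first j ≥ 1 with Y_j ∉ [r,0]). Then E[τ] = ∑_{ℓ=0}^∞ P(Y_j ∈ [r,0] for all j ≤ ℓ) < ∞, and moreover E[τ] = O(|r|) as r → −∞; in particular ∑_{ℓ≥1} P(Y_j ∈ [r,0] for all 1 ≤ j ≤ ℓ) ≤ C·|r| for some universal constant C and all r ≤ −1. -/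
open MeasureTheory ProbabilityTheory Real
open scoped ENNReal

/-!
For `a = (3 - r) / (2 - r)` the quadratic `V u = (u - r + 1) (a - u)` is a Lyapunov function
for the walk killed on leaving `[r, 0]`: for `x ∈ [r, 0]`,
`E[V (x + ξ - 1); x + ξ - 1 ∈ [r, 0]] + 1 ≤ V x`. Indeed `V` has leading coefficient `-1` and the
step has mean `0` and variance `1`, so `E V (x + ξ - 1) = V x - 1`; steps leaving below only drop
nonnegative terms, and `a` is chosen so that, by memorylessness of `ξ`, steps leaving above
contribute exactly `0`. Hence `E[V (Y n); survival up to n]` drops by at least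
`P(survival up to n)` at every step, so `∑ P(survival up to n) ≤ V 0 ≤ 3 |r|`. Finiteness of this
sum forces almost sure exit, and then it is `E τ` by the tail-sum formula.
-/

namespace ProbabilityTheory

theorem IndepFun.lintegral_comp_prodMk {Ω α β : Type*} [MeasurableSpace Ω] [MeasurableSpace α]
    [MeasurableSpace β] {μ : Measure Ω} [IsFiniteMeasure μ] {f : Ω → α} {g : Ω → β}
    (hfg : IndepFun f g μ) (hf : Measurable f) (hg : Measurable g)
    {h : α × β → ℝ≥0∞} (hh : Measurable h) :
    ∫⁻ ω, h (f ω, g ω) ∂μ = ∫⁻ ω, ∫⁻ ω', h (f ω, g ω') ∂μ ∂μ := by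
  rw [← lintegral_map hh (hf.prodMk hg),
    (indepFun_iff_map_prod_eq_prod_map_map hf.aemeasurable hg.aemeasurable).1 hfg,
    lintegral_prod _ hh.aemeasurable, lintegral_map hh.lintegral_prod_right' hf]
  exact lintegral_congr fun ω => lintegral_map (hh.comp measurable_prodMk_left) hg

theorem iIndepFun.indepFun_of_measurable_iSup_lt {Ω α β : Type*} [MeasurableSpace Ω]
    {μ : Measure Ω} [mα : MeasurableSpace α] [MeasurableSpace β] {X : ℕ → Ω → α}
    (hX : ∀ i, Measurable (X i)) (hind : iIndepFun X μ) {n : ℕ} {f : Ω → β}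
    (hf : Measurable[⨆ i < n, mα.comap (X i)] f) : IndepFun f (X n) μ := by
  have h := indep_iSup_of_disjoint (fun i => (hX i).comap_le) hind.iIndep
    (Set.disjoint_singleton_right.2 (Set.self_notMem_Iio (a := n)))
  refine indep_of_indep_of_le_right (indep_of_indep_of_le_left h hf.comap_le) ?_
  exact le_iSup₂ (f := fun i (_ : i ∈ ({n} : Set ℕ)) => mα.comap (X i)) n rfl

end ProbabilityTheory

theorem ENNReal.tsum_ite_lt (k : ℕ) : ∑' n : ℕ, (if n < k then (1 : ℝ≥0∞) else 0) = k := by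
  rw [tsum_eq_sum (s := Finset.range k) fun n hn => if_neg (by simpa using hn),
    Finset.sum_congr rfl fun n hn => if_pos (Finset.mem_range.1 hn)]
  simp

section Survival

variable {Ω β : Type*} {Y : ℕ → Ω → β} {S : Set β}

def survival (Y : ℕ → Ω → β) (S : Set β) (n : ℕ) : Set Ω := {ω | ∀ j ≤ n, Y j ω ∈ S}

theorem survival_succ (n : ℕ) :
    survival Y S (n + 1) = survival Y S n ∩ {ω | Y (n + 1) ω ∈ S} := by
  ext ω
  simp only [survival, Set.mem_inter_iff, Set.mem_ofPred_eq]
  constructor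
  · exact fun h => ⟨fun j hj => h j (hj.trans n.le_succ), h (n + 1) le_rfl⟩
  · rintro ⟨h, hn⟩ j hj
    rcases Nat.le_succ_iff.1 hj with hj | rfl
    exacts [h j hj, hn]

theorem survival_eq_setOf_one_le (hY0 : ∀ ω, Y 0 ω ∈ S) (n : ℕ) :
    survival Y S n = {ω | ∀ j, 1 ≤ j → j ≤ n → Y j ω ∈ S} := by
  ext ω
  refine ⟨fun h j _ hj => h j hj, fun h j hj => ?_⟩
  rcases Nat.eq_zero_or_pos j with rfl | hpos
  exacts [hY0 ω, h j hpos hj]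

theorem lt_sInf_exit_iff_mem_survival {ω : Ω} (hY0 : Y 0 ω ∈ S) (hexit : ∃ j, Y j ω ∉ S)
    (n : ℕ) : n < sInf {j | 1 ≤ j ∧ Y j ω ∉ S} ↔ ω ∈ survival Y S n := by
  have hne : {j | 1 ≤ j ∧ Y j ω ∉ S}.Nonempty := by
    obtain ⟨j, hj⟩ := hexit
    exact ⟨j, Nat.one_le_iff_ne_zero.2 (by rintro rfl; exact hj hY0), hj⟩
  constructor
  · intro hn j hj
    by_contra hjS
    rcases Nat.eq_zero_or_pos j with rfl | hpos
    · exact hjS hY0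
    · exact absurd (Nat.sInf_le (show j ∈ {j | 1 ≤ j ∧ Y j ω ∉ S} from ⟨hpos, hjS⟩)) (by omega)
  · intro hω
    by_contra! hle
    exact (Nat.sInf_mem hne).2 (hω _ hle)

variable [MeasurableSpace Ω] {μ : Measure Ω}

theorem ae_exists_notMem_of_tsum_survival_ne_top (hfin : ∑' n, μ (survival Y S n) ≠ ∞) :
    ∀ᵐ ω ∂μ, ∃ j, Y j ω ∉ S := by
  rw [ae_iff]
  refine le_antisymm (ge_of_tendsto' (ENNReal.tendsto_atTop_zero_of_tsum_ne_top hfin)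
    fun n => measure_mono fun ω hω j _ => ?_) zero_le
  by_contra hj
  exact hω ⟨j, hj⟩

variable [MeasurableSpace β]

theorem measurableSet_survival (hY : ∀ j, Measurable (Y j)) (hS : MeasurableSet S) (n : ℕ) :
    MeasurableSet (survival Y S n) := by
  have h : survival Y S n = ⋂ j, ⋂ (_ : j ≤ n), Y j ⁻¹' S := by
    ext ω; simp [survival]
  rw [h]
  exact .iInter fun j => .iInter fun _ => hY j hS

theorem lintegral_exitTime_eq_tsum (hY : ∀ j, Measurable (Y j)) (hS : MeasurableSet S)
    (hY0 : ∀ ω, Y 0 ω ∈ S) (hfin : ∑' n, μ (survival Y S n) ≠ ∞) :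
    ∫⁻ ω, (sInf {j | 1 ≤ j ∧ Y j ω ∉ S} : ℕ) ∂μ = ∑' n, μ (survival Y S n) := by
  classical
  calc ∫⁻ ω, (sInf {j | 1 ≤ j ∧ Y j ω ∉ S} : ℕ) ∂μ
      = ∫⁻ ω, ∑' n, (survival Y S n).indicator 1 ω ∂μ := by
        refine lintegral_congr_ae
          ((ae_exists_notMem_of_tsum_survival_ne_top hfin).mono fun ω hω => ?_)
        simp only [Set.indicator_apply, ← lt_sInf_exit_iff_mem_survival (hY0 ω) hω, Pi.one_apply,
          ENNReal.tsum_ite_lt]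
    _ = ∑' n, μ (survival Y S n) := by
        rw [lintegral_tsum (f := fun n => (survival Y S n).indicator 1) fun n =>
          (measurable_const.indicator (measurableSet_survival hY hS n)).aemeasurable]
        exact tsum_congr fun n => lintegral_indicator_one (measurableSet_survival hY hS n)

end Survival

section RandomWalk

variable {Ω α : Type*} [AddCommMonoid α] {X : ℕ → Ω → α}

def randomWalk (X : ℕ → Ω → α) (n : ℕ) (ω : Ω) : α := ∑ i ∈ Finset.range n, X i ω

@[simp]
theorem randomWalk_zero (ω : Ω) : randomWalk X 0 ω = 0 := Finset.sum_range_zero _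

theorem randomWalk_succ (n : ℕ) (ω : Ω) : randomWalk X (n + 1) ω = randomWalk X n ω + X n ω :=
  Finset.sum_range_succ _ _

variable [mα : MeasurableSpace α] [MeasurableAdd₂ α]

theorem measurable_randomWalk_iSup_lt {j n : ℕ} (hjn : j ≤ n) :
    Measurable[⨆ i < n, mα.comap (X i)] (randomWalk X j) := by
  apply Finset.measurable_sum
  intro i hi
  exact (comap_measurable (X i)).mono
    (le_iSup₂ (f := fun i (_ : i < n) => mα.comap (X i)) i
      ((Finset.mem_range.1 hi).trans_le hjn)) le_rfl

theorem measurableSet_survival_randomWalk_iSup_lt {S : Set α} (hS : MeasurableSet S) (n : ℕ) :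
    MeasurableSet[⨆ i < n, mα.comap (X i)] (survival (randomWalk X) S n) := by
  have h : survival (randomWalk X) S n = ⋂ j, ⋂ (_ : j ≤ n), randomWalk X j ⁻¹' S := by
    ext ω; simp [survival]
  rw [h]
  exact .iInter fun j => .iInter fun hj => measurable_randomWalk_iSup_lt hj hS

variable [MeasurableSpace Ω]

theorem measurable_randomWalk (hX : ∀ i, Measurable (X i)) (n : ℕ) :
    Measurable (randomWalk X n) :=
  Finset.measurable_sum _ fun i _ => hX i

variable {μ : Measure Ω} {S : Set α} {V : α → ℝ≥0∞}

theorem setLIntegral_survival_succ_add_le [IsFiniteMeasure μ] (hX : ∀ i, Measurable (X i))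
    (hind : iIndepFun X μ) (hS : MeasurableSet S) (hV : Measurable V) {n : ℕ}
    (hdrift : ∀ x ∈ S, ∫⁻ ω, S.indicator V (x + X n ω) ∂μ + 1 ≤ V x) :
    ∫⁻ ω in survival (randomWalk X) S (n + 1), V (randomWalk X (n + 1) ω) ∂μ
        + μ (survival (randomWalk X) S n)
      ≤ ∫⁻ ω in survival (randomWalk X) S n, V (randomWalk X n ω) ∂μ := by
  set A := survival (randomWalk X) S n
  have hA : MeasurableSet A := measurableSet_survival (measurable_randomWalk hX) hS n
  have hindep : IndepFun (fun ω => (A.indicator (1 : Ω → ℝ≥0∞) ω, randomWalk X n ω)) (X n) μ :=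
    hind.indepFun_of_measurable_iSup_lt hX <| .prodMk
      (measurable_const.indicator (measurableSet_survival_randomWalk_iSup_lt hS n))
      (measurable_randomWalk_iSup_lt le_rfl)
  have hW : Measurable (S.indicator V) := hV.indicator hS
  have hstep : ∫⁻ ω in survival (randomWalk X) S (n + 1), V (randomWalk X (n + 1) ω) ∂μ
      = ∫⁻ ω in A, ∫⁻ ω', S.indicator V (randomWalk X n ω + X n ω') ∂μ ∂μ := calc
    _ = ∫⁻ ω, A.indicator 1 ω * S.indicator V (randomWalk X n ω + X n ω) ∂μ := by
      rw [← lintegral_indicator (measurableSet_survival (measurable_randomWalk hX) hS _)]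
      refine lintegral_congr fun ω => ?_
      simp only [survival_succ, randomWalk_succ]
      by_cases hω : ω ∈ A <;> by_cases hω' : randomWalk X n ω + X n ω ∈ S <;> simp_all [A]
    _ = ∫⁻ ω, ∫⁻ ω', A.indicator 1 ω * S.indicator V (randomWalk X n ω + X n ω') ∂μ ∂μ :=
      hindep.lintegral_comp_prodMk (h := fun p => p.1.1 * S.indicator V (p.1.2 + p.2))
        (.prodMk (measurable_const.indicator hA) (measurable_randomWalk hX n)) (hX n)
        (by fun_prop)
    _ = ∫⁻ ω in A, ∫⁻ ω', S.indicator V (randomWalk X n ω + X n ω') ∂μ ∂μ := by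
      rw [← lintegral_indicator hA]
      refine lintegral_congr fun ω => ?_
      have hmeas : Measurable fun ω' => S.indicator V (randomWalk X n ω + X n ω') :=
        hW.comp (measurable_const.add (hX n))
      rw [lintegral_const_mul _ hmeas]
      by_cases hω : ω ∈ A <;> simp [hω]
  rw [hstep, ← setLIntegral_one, ← lintegral_add_right _ measurable_const]
  exact setLIntegral_mono (hV.comp (measurable_randomWalk hX n)) fun ω hω => hdrift _ (hω n le_rfl)

theorem tsum_measure_survival_randomWalk_le [IsProbabilityMeasure μ] (hX : ∀ i, Measurable (X i))
    (hind : iIndepFun X μ) (hS : MeasurableSet S) (hV : Measurable V)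
    (hdrift : ∀ n, ∀ x ∈ S, ∫⁻ ω, S.indicator V (x + X n ω) ∂μ + 1 ≤ V x) :
    ∑' n, μ (survival (randomWalk X) S n) ≤ V 0 := by
  set e : ℕ → ℝ≥0∞ := fun n => ∫⁻ ω in survival (randomWalk X) S n, V (randomWalk X n ω) ∂μ
  have htelescope : ∀ N, ∑ n ∈ Finset.range N, μ (survival (randomWalk X) S n) + e N ≤ e 0 := by
    intro N
    induction N with
    | zero => simp
    | succ N ih => calc
        _ = ∑ n ∈ Finset.range N, μ (survival (randomWalk X) S n)
              + (e (N + 1) + μ (survival (randomWalk X) S N)) := by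
          rw [Finset.sum_range_succ]; ring
        _ ≤ e 0 := (add_le_add_right
          (setLIntegral_survival_succ_add_le hX hind hS hV (hdrift N)) _).trans ih
  have he0 : e 0 ≤ V 0 := by
    simp only [e, randomWalk_zero, setLIntegral_const]
    exact mul_le_of_le_one_right' prob_le_one
  exact ENNReal.tsum_le_of_sum_range_le fun N => (le_self_add.trans (htelescope N)).trans he0

end RandomWalk

noncomputable def exitPotential (r u : ℝ) : ℝ := (u - r + 1) * ((3 - r) / (2 - r) - u)

theorem exitPotential_nonneg {r u : ℝ} (hru : r - 1 ≤ u) (hu : u ≤ 0) :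
    0 ≤ exitPotential r u :=
  mul_nonneg (by linarith)
    (by linarith [div_pos (by linarith : 0 < 3 - r) (by linarith : 0 < 2 - r)])

@[fun_prop]
theorem continuous_exitPotential (r : ℝ) : Continuous (exitPotential r) := by
  unfold exitPotential; fun_prop

theorem integral_exp_neg_mul_exitPotential {r : ℝ} (hr : r ≠ 2) (x : ℝ) :
    ∫ y in (0)..(1 - x), exp (-y) * exitPotential r (x + y - 1) = exitPotential r x - 1 := by
  set a := (3 - r) / (2 - r)
  have ha : a * (2 - r) = 3 - r := div_mul_cancel₀ _ (sub_ne_zero.2 hr.symm)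
  -- `-exp (-y) * (q + q' + q'') (x + y - 1)` is an antiderivative of `exp (-y) * q (x + y - 1)`
  -- for every quadratic `q`; `ha` says that it vanishes at `y = 1 - x`.
  let Q : ℝ → ℝ := fun u => (u - r + 1) * (a - u) + (a + r - 1 - 2 * u) - 2
  have hderiv : ∀ y, HasDerivAt (fun y => -exp (-y) * Q (x + y - 1))
      (exp (-y) * exitPotential r (x + y - 1)) y := by
    intro y
    have hu : HasDerivAt (fun y => x + y - 1) 1 y := ((hasDerivAt_id y).const_add x).sub_const 1
    have hQ : HasDerivAt (fun y => Q (x + y - 1)) (a + r - 3 - 2 * (x + y - 1)) y :=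
      ((((hu.sub_const r).add_const 1).fun_mul (hu.const_sub a)).fun_add
        ((hu.const_mul 2).const_sub (a + r - 1)) |>.sub_const 2).congr_deriv (by ring)
    have hE : HasDerivAt (fun y => -exp (-y)) (exp (-y)) y := by
      simpa using ((hasDerivAt_neg y).exp).fun_neg
    exact (hE.fun_mul hQ).congr_deriv (by simp only [exitPotential, Q]; ring)
  have hcont : Continuous fun y => exp (-y) * exitPotential r (x + y - 1) := by fun_prop
  rw [intervalIntegral.integral_eq_sub_of_hasDerivAt (fun y _ => hderiv y)
    (hcont.intervalIntegrable _ _)]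
  simp only [exitPotential, Q, neg_zero, exp_zero]
  linear_combination (-exp (-(1 - x))) * ha

theorem lintegral_indicator_exitPotential_add_one_le {Ω : Type*} [MeasurableSpace Ω]
    {μ : Measure Ω} {ξ : Ω → ℝ} (hξ : Measurable ξ) (hlaw : μ.map ξ = expMeasure 1) {r x : ℝ}
    (hx : x ∈ Set.Icc r 0) :
    ∫⁻ ω, (Set.Icc r 0).indicator (fun u => ENNReal.ofReal (exitPotential r u)) (x + (ξ ω - 1))
        ∂μ + 1 ≤ ENNReal.ofReal (exitPotential r x) := by
  obtain ⟨hrx, hx0⟩ := hx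
  set f : ℝ → ℝ := fun y => exp (-y) * exitPotential r (x + y - 1)
  have hf : ∀ y ∈ Set.Icc 0 (1 - x), 0 ≤ f y := fun y hy =>
    mul_nonneg (exp_nonneg _) (exitPotential_nonneg (by linarith [hy.1]) (by linarith [hy.2]))
  have hbound : ∀ y, exponentialPDF 1 y *
      (Set.Icc r 0).indicator (fun u => ENNReal.ofReal (exitPotential r u)) (x + (y - 1))
        ≤ (Set.Icc 0 (1 - x)).indicator (fun y => ENNReal.ofReal (f y)) y := by
    intro y
    rcases lt_or_ge y 0 with hy | hy
    · simp [exponentialPDF_of_neg hy]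
    by_cases hu : x + (y - 1) ∈ Set.Icc r 0
    · have hy' : y ∈ Set.Icc 0 (1 - x) := ⟨hy, by linarith [hu.2]⟩
      rw [Set.indicator_of_mem hu, Set.indicator_of_mem hy', exponentialPDF_of_nonneg hy,
        ← ENNReal.ofReal_mul (by positivity)]
      simp only [f, one_mul, add_sub_assoc, le_refl]
    · simp [Set.indicator_of_notMem hu]
  have hint : 0 ≤ ∫ y in Set.Icc 0 (1 - x), f y := setIntegral_nonneg measurableSet_Icc hf
  calc _ ≤ (∫⁻ y in Set.Icc 0 (1 - x), ENNReal.ofReal (f y)) + 1 := by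
        gcongr ?_ + 1
        have hpdf : Measurable (gammaPDF 1 1) := (measurable_gammaPDFReal 1 1).ennreal_ofReal
        have hg : Measurable fun y =>
            (Set.Icc r 0).indicator (fun u => ENNReal.ofReal (exitPotential r u)) (x + (y - 1)) :=
          ((continuous_exitPotential r).measurable.ennreal_ofReal.indicator measurableSet_Icc).comp
            (by fun_prop)
        rw [← lintegral_map hg hξ, hlaw, expMeasure, gammaMeasure,
          lintegral_withDensity_eq_lintegral_mul _ hpdf hg, ← lintegral_indicator measurableSet_Icc]
        exact lintegral_mono hbound
    _ = ENNReal.ofReal ((∫ y in Set.Icc 0 (1 - x), f y) + 1) := by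
        rw [ENNReal.ofReal_add hint zero_le_one, ENNReal.ofReal_one,
          ofReal_integral_eq_lintegral_ofReal (by fun_prop : Continuous f).integrableOn_Icc
            ((ae_restrict_iff' measurableSet_Icc).2 (.of_forall hf))]
    _ = ENNReal.ofReal (exitPotential r x) := by
        have h : ∫ y in (0)..(1 - x), f y = exitPotential r x - 1 :=
          integral_exp_neg_mul_exitPotential (by linarith) x
        rw [integral_Icc_eq_integral_Ioc, ← intervalIntegral.integral_of_le (by linarith), h,
          sub_add_cancel]

theorem exitPotential_zero_le {r : ℝ} (hr : r ≤ -1) : exitPotential r 0 ≤ 3 * |r| := by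
  rw [abs_of_neg (by linarith), exitPotential, sub_zero, mul_div_assoc', div_le_iff₀ (by linarith)]
  nlinarith

/-- Exit time of the centered walk `Y` (steps `Exp(1) − 1`, started at `0`) from `[r, 0]`,
`r < 0`: letting `τ` be the first time `j ≥ 1` with `Y_j ∉ [r,0]`, one has
`E[τ] = ∑_{ℓ≥0} P(Y_j ∈ [r,0] ∀ j ≤ ℓ) < ∞`; moreover there is a universal constant `C > 0`
with `∑_{ℓ≥1} P(Y_j ∈ [r,0] ∀ 1 ≤ j ≤ ℓ) ≤ C·|r|` for all `r ≤ −1`. -/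
theorem stmt19 {Ω : Type*} [MeasurableSpace Ω] (μ : Measure Ω) [IsProbabilityMeasure μ]
    (ξ : ℕ → Ω → ℝ) (hmeas : ∀ i, Measurable (ξ i))
    (hindep : iIndepFun ξ μ)
    (hlaw : ∀ i, μ.map (ξ i) = expMeasure 1)
    (Y : ℕ → Ω → ℝ) (hY : ∀ j ω, Y j ω = ∑ i ∈ Finset.range j, (ξ i ω - 1)) :
    (∀ r : ℝ, r < 0 →
      (∫⁻ ω, ((sInf {j : ℕ | 1 ≤ j ∧ Y j ω ∉ Set.Icc r 0} : ℕ) : ℝ≥0∞) ∂μ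
          = ∑' ℓ : ℕ, μ {ω | ∀ j ≤ ℓ, Y j ω ∈ Set.Icc r 0})
      ∧ (∑' ℓ : ℕ, μ {ω | ∀ j ≤ ℓ, Y j ω ∈ Set.Icc r 0}) < ⊤)
    ∧ ∃ C : ℝ, 0 < C ∧ ∀ r : ℝ, r ≤ -1 →
        ∑' ℓ : ℕ, μ {ω | ∀ j : ℕ, 1 ≤ j → j ≤ ℓ + 1 → Y j ω ∈ Set.Icc r 0}
          ≤ ENNReal.ofReal (C * |r|) := by
  set X : ℕ → Ω → ℝ := fun i ω => ξ i ω - 1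
  obtain rfl : Y = randomWalk X := funext fun j => funext (hY j)
  have hX : ∀ i, Measurable (X i) := fun i => (hmeas i).sub_const 1
  have hbound : ∀ r < 0, ∑' n, μ (survival (randomWalk X) (Set.Icc r 0) n)
      ≤ ENNReal.ofReal (exitPotential r 0) := fun r hr =>
    tsum_measure_survival_randomWalk_le hX (hindep.comp _ fun _ => measurable_id.sub_const 1)
      measurableSet_Icc (continuous_exitPotential r).measurable.ennreal_ofReal
      fun n _ hx => lintegral_indicator_exitPotential_add_one_le (hmeas n) (hlaw n) hx
  have hfin : ∀ r < 0, ∑' n, μ (survival (randomWalk X) (Set.Icc r 0) n) < ∞ := fun r hr =>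
    (hbound r hr).trans_lt ENNReal.ofReal_lt_top
  have hstart : ∀ r < 0, ∀ ω, randomWalk X 0 ω ∈ Set.Icc r 0 := fun r hr ω => by simp [hr.le]
  refine ⟨fun r hr => ⟨lintegral_exitTime_eq_tsum (measurable_randomWalk hX) measurableSet_Icc
    (hstart r hr) (hfin r hr).ne, hfin r hr⟩, 3, by norm_num, fun r hr => ?_⟩
  have hr0 : r < 0 := by linarith
  calc ∑' ℓ : ℕ, μ {ω | ∀ j : ℕ, 1 ≤ j → j ≤ ℓ + 1 → randomWalk X j ω ∈ Set.Icc r 0}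
      = ∑' ℓ : ℕ, μ (survival (randomWalk X) (Set.Icc r 0) (ℓ + 1)) := by
        simp only [survival_eq_setOf_one_le (hstart r hr0)]
    _ ≤ ∑' n, μ (survival (randomWalk X) (Set.Icc r 0) n) :=
        ENNReal.tsum_comp_le_tsum_of_injective (add_left_injective 1) _
    _ ≤ ENNReal.ofReal (3 * |r|) :=
        (hbound r hr0).trans (ENNReal.ofReal_le_ofReal (exitPotential_zero_le hr))
end
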